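/- Fix ν > 0, ρ ∈ ℝ, and α > 0. For each n ≥ 1, let α_n > 0 satisfy α_n < Γ(ν + n/2)^{1/n}/(√π·e^ρ·Γ(ν)^{1/n}), and assume α_n/√n → α as n → ∞. Let X_n be a random vector in ℝⁿ with density proportional to K_n², where K_n(x) = e^{nρ}·(1 + |x/α_n|²)^{−(ν + n/2)} is the Cauchy kernel. Then lim_{n→∞} P(|X_n| ≤ √n·R) = 0 for every 0 < R < α, and = 1 for every R > α. -/

import Mathlib

/-!
Rescaling by `α_n` and passing to polar coordinates,
`P(|X_n| ≤ r) = ∫₀^{r/α_n} φ_n / ∫₀^∞ φ_n` with `φ_n(s) = s^{n-1} (1 + s²)^{-(2ν+n)}`.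
Writing `φ_n = g^{n-1} (1 + s²)^{-(2ν+1)}` with `g s = s / (1 + s²)`, which is strictly
increasing on `[0, 1]` and strictly decreasing on `[1, ∞)`, the mass of `φ_n` away from `s = 1`
is a geometrically small fraction of the total. Since `√n R / α_n → R / α`, the probability
tends to `0` if `R < α` and to `1` if `R > α`.
-/

open MeasureTheory Filter Real
open scoped ENNReal Topology

/-- The Cauchy kernel on `ℝⁿ` with parameters `ν > 0`, `α_n > 0` and intensity `e^{nρ}`:
`K_n(x) = e^{nρ}·(1 + |x/α_n|²)^{−(ν + n/2)}`. -/
noncomputable def cauchyKernel (ν ρ αn : ℝ) (n : ℕ) (x : EuclideanSpace ℝ (Fin n)) : ℝ :=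
  Real.exp (n * ρ) * (1 + ‖x‖ ^ 2 / αn ^ 2) ^ (-(ν + (n : ℝ) / 2))

open Set Metric
open scoped Pointwise

theorem setIntegral_closedBall_fun_norm_addHaar {E F : Type*} [NormedAddCommGroup E]
    [NormedSpace ℝ E] [Nontrivial E] [FiniteDimensional ℝ E] [MeasurableSpace E] [BorelSpace E]
    [NormedAddCommGroup F] [NormedSpace ℝ F] (μ : Measure E) [μ.IsAddHaarMeasure]
    (f : ℝ → F) (r : ℝ) :
    ∫ x in closedBall (0 : E) r, f ‖x‖ ∂μ = Module.finrank ℝ E • μ.real (ball 0 1) •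
      ∫ y in Ioc 0 r, y ^ (Module.finrank ℝ E - 1) • f y := by
  have hind : (closedBall (0 : E) r).indicator (fun x ↦ f ‖x‖) =
      fun x ↦ (Iic r).indicator f ‖x‖ := by
    ext x; by_cases h : ‖x‖ ≤ r <;> simp [indicator, h]
  rw [← integral_indicator measurableSet_closedBall, hind, integral_fun_norm_addHaar μ,
    ← Ioi_inter_Iic, inter_comm, ← Measure.restrict_restrict measurableSet_Iic,
    ← integral_indicator measurableSet_Iic]
  simp_rw [indicator_smul_apply]

theorem cauchyKernel_sq (ν ρ a : ℝ) (n : ℕ) (x : EuclideanSpace ℝ (Fin n)) :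
    cauchyKernel ν ρ a n x ^ 2 = exp (2 * n * ρ) * (1 + ‖a⁻¹ • x‖ ^ 2) ^ (-(2 * ν + n)) := by
  have hnorm : ‖a⁻¹ • x‖ ^ 2 = ‖x‖ ^ 2 / a ^ 2 := by
    rw [norm_smul, mul_pow, norm_inv, Real.norm_eq_abs, inv_pow, sq_abs, inv_mul_eq_div]
  have hpos : 0 ≤ 1 + ‖x‖ ^ 2 / a ^ 2 := by positivity
  rw [cauchyKernel, hnorm, mul_pow, ← rpow_mul_natCast hpos, ← exp_nat_mul]
  push_cast
  ring_nf

/-- The density of `|X_n| / α_n` up to a constant factor. -/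
noncomputable def cauchyRadial (ν : ℝ) (n : ℕ) (s : ℝ) : ℝ :=
  s ^ (n - 1) * (1 + s ^ 2) ^ (-(2 * ν + n))

theorem integral_closedBall_cauchyKernel_sq_div {n : ℕ} (hn : 1 ≤ n) (ν ρ : ℝ) {a : ℝ}
    (ha : 0 < a) (c : ℝ) :
    (∫ x in closedBall 0 c, cauchyKernel ν ρ a n x ^ 2) / ∫ x, cauchyKernel ν ρ a n x ^ 2 =
      (∫ s in Ioc 0 (c / a), cauchyRadial ν n s) / ∫ s in Ioi 0, cauchyRadial ν n s := by
  have : Nontrivial (EuclideanSpace ℝ (Fin n)) := by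
    rw [← Module.finrank_pos_iff (R := ℝ), finrank_euclideanSpace_fin]; omega
  set f : ℝ → ℝ := fun r ↦ (1 + r ^ 2) ^ (-(2 * ν + n))
  have hball : a⁻¹ • closedBall (0 : EuclideanSpace ℝ (Fin n)) c = closedBall 0 (c / a) := by
    rw [smul_closedBall' (inv_ne_zero ha.ne'), smul_zero, norm_inv, Real.norm_of_nonneg ha.le,
      inv_mul_eq_div]
  have hnum : ∫ x in closedBall 0 c, cauchyKernel ν ρ a n x ^ 2 =
      exp (2 * n * ρ) * a ^ n * (n * volume.real (ball (0 : EuclideanSpace ℝ (Fin n)) 1)) *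
        ∫ s in Ioc 0 (c / a), cauchyRadial ν n s := by
    simp_rw [cauchyKernel_sq]
    rw [integral_const_mul,
      Measure.setIntegral_comp_smul_of_pos volume (fun y ↦ f ‖y‖) _ (inv_pos.2 ha), hball,
      setIntegral_closedBall_fun_norm_addHaar, finrank_euclideanSpace_fin]
    simp [cauchyRadial, f, mul_assoc]
  have hden : ∫ x, cauchyKernel ν ρ a n x ^ 2 =
      exp (2 * n * ρ) * a ^ n * (n * volume.real (ball (0 : EuclideanSpace ℝ (Fin n)) 1)) *
        ∫ s in Ioi 0, cauchyRadial ν n s := by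
    simp_rw [cauchyKernel_sq]
    rw [integral_const_mul,
      Measure.integral_comp_inv_smul_of_nonneg volume (fun y ↦ f ‖y‖) ha.le,
      integral_fun_norm_addHaar, finrank_euclideanSpace_fin]
    simp [cauchyRadial, f, mul_assoc]
  have hvol : 0 < volume.real (ball (0 : EuclideanSpace ℝ (Fin n)) 1) :=
    ENNReal.toReal_pos (measure_ball_pos volume 0 one_pos).ne' measure_ball_lt_top.ne
  have hn0 : (0 : ℝ) < n := by exact_mod_cast hn
  rw [hnum, hden, mul_div_mul_left]
  positivity

section Unimodal

variable {s t : ℝ}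

-- The four comparisons below rest on `t (1 + s²) - s (1 + t²) = (t - s) (1 - s t)`.
theorem div_one_add_sq_le_of_mul_le_one (hst : s ≤ t) (h : s * t ≤ 1) :
    s / (1 + s ^ 2) ≤ t / (1 + t ^ 2) := by
  rw [div_le_div_iff₀ (by positivity) (by positivity)]
  nlinarith [mul_nonneg (sub_nonneg.2 hst) (sub_nonneg.2 h)]

theorem div_one_add_sq_le_of_one_le_mul (hst : s ≤ t) (h : 1 ≤ s * t) :
    t / (1 + t ^ 2) ≤ s / (1 + s ^ 2) := by
  rw [div_le_div_iff₀ (by positivity) (by positivity)]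
  nlinarith [mul_nonneg (sub_nonneg.2 hst) (sub_nonneg.2 h)]

theorem div_one_add_sq_lt_of_mul_lt_one (hst : s < t) (h : s * t < 1) :
    s / (1 + s ^ 2) < t / (1 + t ^ 2) := by
  rw [div_lt_div_iff₀ (by positivity) (by positivity)]
  nlinarith [mul_pos (sub_pos.2 hst) (sub_pos.2 h)]

theorem div_one_add_sq_lt_of_one_lt_mul (hst : s < t) (h : 1 < s * t) :
    t / (1 + t ^ 2) < s / (1 + s ^ 2) := by
  rw [div_lt_div_iff₀ (by positivity) (by positivity)]
  nlinarith [mul_pos (sub_pos.2 hst) (sub_pos.2 h)]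

theorem abs_div_one_add_sq_le_one (s : ℝ) : |s / (1 + s ^ 2)| ≤ 1 := by
  rw [abs_div, abs_of_pos (by positivity : (0 : ℝ) < 1 + s ^ 2), div_le_one (by positivity)]
  nlinarith [sq_abs s, abs_nonneg s]

end Unimodal

theorem tendsto_mul_pow_sub_one_nhds_zero (C : ℝ) {q : ℝ} (hq0 : 0 ≤ q) (hq1 : q < 1) :
    Tendsto (fun n : ℕ ↦ C * q ^ (n - 1)) atTop (𝓝 0) := by
  simpa using
    ((tendsto_pow_atTop_nhds_zero_of_lt_one hq0 hq1).comp (tendsto_sub_atTop_nat 1)).const_mul C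

section CauchyRadial

variable {ν : ℝ} {n : ℕ}

theorem cauchyRadial_eq_pow_mul (hn : 1 ≤ n) (s : ℝ) :
    cauchyRadial ν n s = (s / (1 + s ^ 2)) ^ (n - 1) * (1 + s ^ 2) ^ (-(2 * ν + 1)) := by
  have hpos : 0 < 1 + s ^ 2 := by positivity
  have hexp : -(2 * ν + n) = -((n - 1 : ℕ) : ℝ) + -(2 * ν + 1) := by
    rw [Nat.cast_sub hn]; push_cast; ring
  rw [cauchyRadial, hexp, rpow_add hpos, rpow_neg hpos.le, rpow_natCast, div_pow, div_eq_mul_inv]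
  ring

theorem continuous_cauchyRadial (ν : ℝ) (n : ℕ) : Continuous (cauchyRadial ν n) := by
  unfold cauchyRadial
  exact (continuous_pow _).mul ((continuous_const.add (continuous_pow 2)).rpow_const
    fun s ↦ Or.inl (by positivity : (0 : ℝ) < 1 + s ^ 2).ne')

theorem cauchyRadial_nonneg (ν : ℝ) (n : ℕ) {s : ℝ} (hs : 0 ≤ s) : 0 ≤ cauchyRadial ν n s := by
  unfold cauchyRadial; positivity

theorem one_add_sq_rpow_le_one (hν : 0 ≤ ν) (s : ℝ) : (1 + s ^ 2) ^ (-(2 * ν + 1)) ≤ 1 :=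
  rpow_le_one_of_one_le_of_nonpos (by nlinarith [sq_nonneg s]) (by linarith)

theorem one_add_sq_rpow_le_inv (hν : 0 ≤ ν) (s : ℝ) :
    (1 + s ^ 2) ^ (-(2 * ν + 1)) ≤ (1 + s ^ 2)⁻¹ := by
  rw [← rpow_neg_one]
  exact rpow_le_rpow_of_exponent_le (by nlinarith [sq_nonneg s]) (by linarith)

theorem integrable_cauchyRadial (hν : 0 ≤ ν) (hn : 1 ≤ n) : Integrable (cauchyRadial ν n) := by
  refine integrable_inv_one_add_sq.mono' (continuous_cauchyRadial ν n).aestronglyMeasurable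
    (Eventually.of_forall fun s ↦ ?_)
  rw [Real.norm_eq_abs, cauchyRadial_eq_pow_mul hn, abs_mul, abs_pow,
    abs_of_pos (rpow_pos_of_pos (by positivity : (0 : ℝ) < 1 + s ^ 2) _)]
  calc |s / (1 + s ^ 2)| ^ (n - 1) * (1 + s ^ 2) ^ (-(2 * ν + 1))
      ≤ 1 * (1 + s ^ 2)⁻¹ := by
        gcongr
        · exact pow_le_one₀ (abs_nonneg _) (abs_div_one_add_sq_le_one s)
        · exact one_add_sq_rpow_le_inv hν s
    _ = (1 + s ^ 2)⁻¹ := one_mul _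

theorem setIntegral_cauchyRadial_mono (hν : 0 ≤ ν) (hn : 1 ≤ n) {S T : Set ℝ}
    (hT : MeasurableSet T) (hT0 : T ⊆ Ici 0) (hST : S ⊆ T) :
    ∫ s in S, cauchyRadial ν n s ≤ ∫ s in T, cauchyRadial ν n s :=
  setIntegral_mono_set (integrable_cauchyRadial hν hn).integrableOn
    ((ae_restrict_mem hT).mono fun _ hs ↦ cauchyRadial_nonneg ν n (hT0 hs)) hST.eventuallyLE

theorem setIntegral_cauchyRadial_nonneg {S : Set ℝ} (hS : MeasurableSet S) (hS0 : S ⊆ Ici 0) :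
    0 ≤ ∫ s in S, cauchyRadial ν n s :=
  MeasureTheory.setIntegral_nonneg hS fun _ hs ↦ cauchyRadial_nonneg ν n (hS0 hs)

theorem setIntegral_Ioc_cauchyRadial_le (hν : 0 ≤ ν) (hn : 1 ≤ n) {t : ℝ} (ht0 : 0 ≤ t)
    (ht1 : t ≤ 1) :
    ∫ s in Ioc 0 t, cauchyRadial ν n s ≤ t * (t / (1 + t ^ 2)) ^ (n - 1) := by
  have hbound : ∀ s ∈ Ioc 0 t, cauchyRadial ν n s ≤ (t / (1 + t ^ 2)) ^ (n - 1) := by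
    rintro s ⟨hs0, hst⟩
    rw [cauchyRadial_eq_pow_mul hn, ← mul_one ((t / (1 + t ^ 2)) ^ (n - 1))]
    exact mul_le_mul (pow_le_pow_left₀ (by positivity)
      (div_one_add_sq_le_of_mul_le_one hst (by nlinarith)) _) (one_add_sq_rpow_le_one hν s)
      (by positivity) (by positivity)
  calc ∫ s in Ioc 0 t, cauchyRadial ν n s
      ≤ ∫ _ in Ioc 0 t, (t / (1 + t ^ 2)) ^ (n - 1) :=
        setIntegral_mono_on (integrable_cauchyRadial hν hn).integrableOn
          (integrableOn_const (by simp)) measurableSet_Ioc hbound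
    _ = t * (t / (1 + t ^ 2)) ^ (n - 1) := by
        rw [setIntegral_const, Real.volume_real_Ioc_of_le ht0, sub_zero, smul_eq_mul]

theorem le_setIntegral_Ioi_cauchyRadial (hν : 0 ≤ ν) (hn : 1 ≤ n) {u v : ℝ} (hu : 0 ≤ u)
    (huv : u ≤ v) :
    (v - u) * (1 + v ^ 2) ^ (-(2 * ν + 1)) * min (u / (1 + u ^ 2)) (v / (1 + v ^ 2)) ^ (n - 1)
      ≤ ∫ s in Ioi 0, cauchyRadial ν n s := by
  have hbound : ∀ s ∈ Ioc u v, (1 + v ^ 2) ^ (-(2 * ν + 1)) *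
      min (u / (1 + u ^ 2)) (v / (1 + v ^ 2)) ^ (n - 1) ≤ cauchyRadial ν n s := by
    rintro s ⟨hus, hsv⟩
    have hv : 0 ≤ v := hu.trans huv
    have hmin : min (u / (1 + u ^ 2)) (v / (1 + v ^ 2)) ≤ s / (1 + s ^ 2) := by
      rcases le_total s 1 with hs1 | hs1
      · exact (min_le_left _ _).trans (div_one_add_sq_le_of_mul_le_one hus.le (by nlinarith))
      · exact (min_le_right _ _).trans (div_one_add_sq_le_of_one_le_mul hsv (by nlinarith))
    rw [cauchyRadial_eq_pow_mul hn, mul_comm]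
    have hs0 : 0 ≤ s := hu.trans hus.le
    exact mul_le_mul (pow_le_pow_left₀ (le_min (by positivity) (by positivity)) hmin _)
      (rpow_le_rpow_of_nonpos (by positivity) (by nlinarith) (by linarith))
      (by positivity) (by positivity)
  calc (v - u) * (1 + v ^ 2) ^ (-(2 * ν + 1)) *
        min (u / (1 + u ^ 2)) (v / (1 + v ^ 2)) ^ (n - 1)
      = ∫ _ in Ioc u v, (1 + v ^ 2) ^ (-(2 * ν + 1)) *
          min (u / (1 + u ^ 2)) (v / (1 + v ^ 2)) ^ (n - 1) := by
        rw [setIntegral_const, Real.volume_real_Ioc_of_le huv, smul_eq_mul, mul_assoc]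
    _ ≤ ∫ s in Ioc u v, cauchyRadial ν n s :=
        setIntegral_mono_on (integrableOn_const (by simp))
          (integrable_cauchyRadial hν hn).integrableOn measurableSet_Ioc hbound
    _ ≤ ∫ s in Ioi 0, cauchyRadial ν n s :=
        setIntegral_cauchyRadial_mono hν hn measurableSet_Ioi Ioi_subset_Ici_self
          fun _ hs ↦ hu.trans_lt hs.1

theorem setIntegral_Ioi_cauchyRadial_pos (hν : 0 ≤ ν) (hn : 1 ≤ n) :
    0 < ∫ s in Ioi 0, cauchyRadial ν n s :=
  lt_of_lt_of_le (by norm_num; positivity)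
    (le_setIntegral_Ioi_cauchyRadial hν hn zero_le_one one_le_two)

theorem setIntegral_Ioi_cauchyRadial_le (hν : 0 ≤ ν) (hn : 1 ≤ n) {t : ℝ} (ht : 1 ≤ t) :
    ∫ s in Ioi t, cauchyRadial ν n s ≤ (t / (1 + t ^ 2)) ^ (n - 1) * π := by
  have hbound : ∀ s ∈ Ioi t,
      cauchyRadial ν n s ≤ (t / (1 + t ^ 2)) ^ (n - 1) * (1 + s ^ 2)⁻¹ := by
    intro s (hts : t < s)
    have ht0 : 0 ≤ t := zero_le_one.trans ht
    have hs0 : 0 ≤ s := ht0.trans hts.le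
    rw [cauchyRadial_eq_pow_mul hn]
    exact mul_le_mul (pow_le_pow_left₀ (by positivity)
      (div_one_add_sq_le_of_one_le_mul hts.le (by nlinarith)) _) (one_add_sq_rpow_le_inv hν s)
      (by positivity) (by positivity)
  calc ∫ s in Ioi t, cauchyRadial ν n s
      ≤ ∫ s in Ioi t, (t / (1 + t ^ 2)) ^ (n - 1) * (1 + s ^ 2)⁻¹ :=
        setIntegral_mono_on (integrable_cauchyRadial hν hn).integrableOn
          (integrable_inv_one_add_sq.integrableOn.const_mul _) measurableSet_Ioi hbound
    _ = (t / (1 + t ^ 2)) ^ (n - 1) * ∫ s in Ioi t, (1 + s ^ 2)⁻¹ := integral_const_mul _ _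
    _ ≤ (t / (1 + t ^ 2)) ^ (n - 1) * π := by
        gcongr
        rw [← integral_univ_inv_one_add_sq]
        exact setIntegral_le_integral integrable_inv_one_add_sq
          (Eventually.of_forall fun s ↦ by positivity)

theorem exists_setIntegral_Ioc_cauchyRadial_div_le_geometric (hν : 0 ≤ ν) {t : ℝ} (ht0 : 0 ≤ t)
    (ht1 : t < 1) :
    ∃ C q : ℝ, 0 ≤ q ∧ q < 1 ∧ ∀ n : ℕ, 1 ≤ n →
      (∫ s in Ioc 0 t, cauchyRadial ν n s) / ∫ s in Ioi 0, cauchyRadial ν n s ≤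
        C * q ^ (n - 1) := by
  -- the total mass is at least that of `[τ, 1]`, where `g ≥ g τ > g t`
  obtain ⟨τ, htτ, hτ1⟩ := exists_between ht1
  have hgτ : 0 < τ / (1 + τ ^ 2) := div_pos (by linarith) (by positivity)
  refine ⟨t / ((1 - τ) * (1 + 1 ^ 2) ^ (-(2 * ν + 1))), (t / (1 + t ^ 2)) / (τ / (1 + τ ^ 2)),
    by positivity, (div_lt_one hgτ).2 (div_one_add_sq_lt_of_mul_lt_one htτ (by nlinarith)),
    fun n hn ↦ ?_⟩
  have hlower := le_setIntegral_Ioi_cauchyRadial hν hn (u := τ) (v := 1) (by linarith) hτ1.le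
  rw [min_eq_left (div_one_add_sq_le_of_mul_le_one hτ1.le (by linarith))] at hlower
  have h1τ : 0 < 1 - τ := by linarith
  calc (∫ s in Ioc 0 t, cauchyRadial ν n s) / ∫ s in Ioi 0, cauchyRadial ν n s
      ≤ t * (t / (1 + t ^ 2)) ^ (n - 1) /
          ((1 - τ) * (1 + 1 ^ 2) ^ (-(2 * ν + 1)) * (τ / (1 + τ ^ 2)) ^ (n - 1)) :=
        div_le_div₀ (by positivity) (setIntegral_Ioc_cauchyRadial_le hν hn ht0 ht1.le)
          (by positivity) hlower
    _ = _ := by rw [mul_div_mul_comm, ← div_pow]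

theorem exists_setIntegral_Ioi_cauchyRadial_div_le_geometric (hν : 0 ≤ ν) {t : ℝ} (ht : 1 < t) :
    ∃ C q : ℝ, 0 ≤ q ∧ q < 1 ∧ ∀ n : ℕ, 1 ≤ n →
      (∫ s in Ioi t, cauchyRadial ν n s) / ∫ s in Ioi 0, cauchyRadial ν n s ≤
        C * q ^ (n - 1) := by
  -- the total mass is at least that of `[1, τ]`, where `g ≥ g τ > g t`
  obtain ⟨τ, h1τ, hτt⟩ := exists_between ht
  have hgτ : 0 < τ / (1 + τ ^ 2) := div_pos (by linarith) (by positivity)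
  refine ⟨π / ((τ - 1) * (1 + τ ^ 2) ^ (-(2 * ν + 1))), (t / (1 + t ^ 2)) / (τ / (1 + τ ^ 2)),
    div_nonneg (div_nonneg (by linarith) (by positivity)) hgτ.le,
    (div_lt_one hgτ).2 (div_one_add_sq_lt_of_one_lt_mul hτt (by nlinarith)), fun n hn ↦ ?_⟩
  have hlower := le_setIntegral_Ioi_cauchyRadial hν hn (u := 1) (v := τ) zero_le_one h1τ.le
  rw [min_eq_right (div_one_add_sq_le_of_one_le_mul h1τ.le (by linarith))] at hlower
  have hτ1 : 0 < τ - 1 := by linarith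
  have hgt : 0 ≤ t / (1 + t ^ 2) := div_nonneg (by linarith) (by positivity)
  calc (∫ s in Ioi t, cauchyRadial ν n s) / ∫ s in Ioi 0, cauchyRadial ν n s
      ≤ π * (t / (1 + t ^ 2)) ^ (n - 1) /
          ((τ - 1) * (1 + τ ^ 2) ^ (-(2 * ν + 1)) * (τ / (1 + τ ^ 2)) ^ (n - 1)) :=
        div_le_div₀ (by positivity)
          ((setIntegral_Ioi_cauchyRadial_le hν hn ht.le).trans_eq (mul_comm _ _))
          (by positivity) hlower
    _ = _ := by rw [mul_div_mul_comm, ← div_pow]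

theorem tendsto_setIntegral_Ioc_cauchyRadial_div_of_lt_one (hν : 0 ≤ ν) {t : ℕ → ℝ} {c : ℝ}
    (ht : Tendsto t atTop (𝓝 c)) (hc : c < 1) :
    Tendsto (fun n ↦ (∫ s in Ioc 0 (t n), cauchyRadial ν n s) / ∫ s in Ioi 0, cauchyRadial ν n s)
      atTop (𝓝 0) := by
  obtain ⟨τ, hcτ, hτ1⟩ := exists_between (max_lt hc one_pos)
  obtain ⟨C, q, hq0, hq1, hbound⟩ :=
    exists_setIntegral_Ioc_cauchyRadial_div_le_geometric hν ((le_max_right c 0).trans hcτ.le) hτ1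
  have htotal n : 0 ≤ ∫ s in Ioi 0, cauchyRadial ν n s :=
    setIntegral_cauchyRadial_nonneg measurableSet_Ioi Ioi_subset_Ici_self
  refine squeeze_zero' (Eventually.of_forall fun n ↦ div_nonneg (setIntegral_cauchyRadial_nonneg
      measurableSet_Ioc (Ioc_subset_Ioi_self.trans Ioi_subset_Ici_self)) (htotal n))
    ?_ (tendsto_mul_pow_sub_one_nhds_zero C hq0 hq1)
  filter_upwards [eventually_ge_atTop 1, ht.eventually_le_const ((le_max_left c 0).trans_lt hcτ)]
    with n hn htn
  refine le_trans (div_le_div_of_nonneg_right ?_ (htotal n)) (hbound n hn)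
  exact setIntegral_cauchyRadial_mono hν hn measurableSet_Ioc
    (Ioc_subset_Ioi_self.trans Ioi_subset_Ici_self) (Ioc_subset_Ioc_right htn)

theorem tendsto_setIntegral_Ioc_cauchyRadial_div_of_one_lt (hν : 0 ≤ ν) {t : ℕ → ℝ} {c : ℝ}
    (ht : Tendsto t atTop (𝓝 c)) (hc : 1 < c) :
    Tendsto (fun n ↦ (∫ s in Ioc 0 (t n), cauchyRadial ν n s) / ∫ s in Ioi 0, cauchyRadial ν n s)
      atTop (𝓝 1) := by
  obtain ⟨τ, h1τ, hτc⟩ := exists_between hc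
  obtain ⟨C, q, hq0, hq1, hbound⟩ := exists_setIntegral_Ioi_cauchyRadial_div_le_geometric hν h1τ
  have hτ0 : 0 ≤ τ := zero_le_one.trans h1τ.le
  have htotal n : 0 ≤ ∫ s in Ioi 0, cauchyRadial ν n s :=
    setIntegral_cauchyRadial_nonneg measurableSet_Ioi Ioi_subset_Ici_self
  have htail : Tendsto
      (fun n ↦ (∫ s in Ioi (t n), cauchyRadial ν n s) / ∫ s in Ioi 0, cauchyRadial ν n s)
      atTop (𝓝 0) := by
    refine squeeze_zero' ?_ ?_ (tendsto_mul_pow_sub_one_nhds_zero C hq0 hq1)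
    · filter_upwards [ht.eventually_const_le hτc] with n htn
      exact div_nonneg (setIntegral_cauchyRadial_nonneg measurableSet_Ioi
        (Ioi_subset_Ici (hτ0.trans htn))) (htotal n)
    · filter_upwards [eventually_ge_atTop 1, ht.eventually_const_le hτc] with n hn htn
      refine le_trans (div_le_div_of_nonneg_right ?_ (htotal n)) (hbound n hn)
      exact setIntegral_cauchyRadial_mono hν hn measurableSet_Ioi (Ioi_subset_Ici hτ0)
        (Ioi_subset_Ioi htn)
  refine (by simpa using tendsto_const_nhds.sub htail : Tendsto _ atTop (𝓝 (1 : ℝ))).congr' ?_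
  filter_upwards [eventually_ge_atTop 1, ht.eventually_const_le hτc] with n hn htn
  have htn0 : 0 ≤ t n := hτ0.trans htn
  have hsplit : ∫ s in Ioi 0, cauchyRadial ν n s =
      (∫ s in Ioc 0 (t n), cauchyRadial ν n s) + ∫ s in Ioi (t n), cauchyRadial ν n s := by
    rw [← setIntegral_union (Ioc_disjoint_Ioi le_rfl) measurableSet_Ioi
      (integrable_cauchyRadial hν hn).integrableOn (integrable_cauchyRadial hν hn).integrableOn,
      Ioc_union_Ioi_eq_Ioi htn0]
  have hpos := setIntegral_Ioi_cauchyRadial_pos hν hn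
  rw [eq_div_iff hpos.ne', sub_mul, div_mul_cancel₀ _ hpos.ne', one_mul]
  linarith

end CauchyRadial

theorem cauchy_reach_of_repulsion_general (ν ρ α : ℝ) (hν : 0 < ν) (hα : 0 < α)
    (a : ℕ → ℝ) (ha_pos : ∀ n : ℕ, 1 ≤ n → 0 < a n)
    (ha_lim : Tendsto (fun n : ℕ => a n / Real.sqrt n) atTop (nhds α))
    (Ω : ℕ → Type*) [∀ n, MeasurableSpace (Ω n)]
    (μ : ∀ n, Measure (Ω n))
    (X : ∀ n, Ω n → EuclideanSpace ℝ (Fin n))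
    (hdens : ∀ n : ℕ, 1 ≤ n → ∀ B : Set (EuclideanSpace ℝ (Fin n)), MeasurableSet B →
      ((μ n) ((X n) ⁻¹' B)).toReal =
        (∫ x in B, (cauchyKernel ν ρ (a n) n x) ^ 2) /
          ∫ x, (cauchyKernel ν ρ (a n) n x) ^ 2) :
    (∀ R : ℝ, 0 < R → R < α →
      Tendsto (fun n : ℕ => ((μ n) {ω | ‖X n ω‖ ≤ Real.sqrt n * R}).toReal)
        atTop (nhds 0)) ∧
    (∀ R : ℝ, α < R →
      Tendsto (fun n : ℕ => ((μ n) {ω | ‖X n ω‖ ≤ Real.sqrt n * R}).toReal)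
        atTop (nhds 1)) := by
  have hprob : ∀ R : ℝ, ∀ᶠ n : ℕ in atTop,
      (∫ s in Ioc 0 (Real.sqrt n * R / a n), cauchyRadial ν n s) /
        (∫ s in Ioi 0, cauchyRadial ν n s) =
      ((μ n) {ω | ‖X n ω‖ ≤ Real.sqrt n * R}).toReal := by
    intro R
    filter_upwards [eventually_ge_atTop 1] with n hn
    have hball : {ω | ‖X n ω‖ ≤ Real.sqrt n * R} = X n ⁻¹' closedBall 0 (Real.sqrt n * R) := by
      ext; simp
    rw [hball, hdens n hn _ measurableSet_closedBall,
      integral_closedBall_cauchyKernel_sq_div hn ν ρ (ha_pos n hn)]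
  have hlim : ∀ R : ℝ, Tendsto (fun n : ℕ ↦ Real.sqrt n * R / a n) atTop (𝓝 (R / α)) := by
    intro R
    refine ((tendsto_const_nhds (x := R)).div ha_lim hα.ne').congr fun n ↦ ?_
    rw [Pi.div_apply, div_div_eq_mul_div, mul_comm]
  refine ⟨fun R _ hRα ↦ ?_, fun R hRα ↦ ?_⟩
  · exact (tendsto_setIntegral_Ioc_cauchyRadial_div_of_lt_one hν.le (hlim R)
      ((div_lt_one hα).2 hRα)).congr' (hprob R)
  · exact (tendsto_setIntegral_Ioc_cauchyRadial_div_of_one_lt hν.le (hlim R)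
      ((one_lt_div hα).2 hRα)).congr' (hprob R)

/-- For the Cauchy models with `α_n/√n → α` (and the existence bound),
`P(|X_n| ≤ √n·R) → 0` for every `0 < R < α` and `→ 1` for every `R > α`. -/
theorem cauchy_reach_of_repulsion (ν ρ α : ℝ) (hν : 0 < ν) (hα : 0 < α)
    (a : ℕ → ℝ) (ha_pos : ∀ n : ℕ, 1 ≤ n → 0 < a n)
    (ha_bnd : ∀ n : ℕ, 1 ≤ n →
      a n < Real.Gamma (ν + (n : ℝ) / 2) ^ ((1 : ℝ) / n) /
        (Real.sqrt π * Real.exp ρ * Real.Gamma ν ^ ((1 : ℝ) / n)))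
    (ha_lim : Tendsto (fun n : ℕ => a n / Real.sqrt n) atTop (nhds α))
    (Ω : ℕ → Type*) [∀ n, MeasurableSpace (Ω n)]
    (μ : ∀ n, Measure (Ω n)) (hμ : ∀ n, IsProbabilityMeasure (μ n))
    (X : ∀ n, Ω n → EuclideanSpace ℝ (Fin n))
    (hX : ∀ n, Measurable (X n))
    (hdens : ∀ n : ℕ, 1 ≤ n → ∀ B : Set (EuclideanSpace ℝ (Fin n)), MeasurableSet B →
      ((μ n) ((X n) ⁻¹' B)).toReal =
        (∫ x in B, (cauchyKernel ν ρ (a n) n x) ^ 2) /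
          ∫ x, (cauchyKernel ν ρ (a n) n x) ^ 2) :
    (∀ R : ℝ, 0 < R → R < α →
      Tendsto (fun n : ℕ => ((μ n) {ω | ‖X n ω‖ ≤ Real.sqrt n * R}).toReal)
        atTop (nhds 0)) ∧
    (∀ R : ℝ, α < R →
      Tendsto (fun n : ℕ => ((μ n) {ω | ‖X n ω‖ ≤ Real.sqrt n * R}).toReal)
        atTop (nhds 1)) :=
  cauchy_reach_of_repulsion_general ν ρ α hν hα a ha_pos ha_lim Ω μ X hdens
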